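/- arXiv:1809.05315 — 2 statements merged into one kernel-verified Lean document; each statement's English description precedes it below -/
import Mathlib

section
/- Let k1 < 0, k2 ∈ ℝ, β(τ) = k1 ln τ + k2, and τ*(d) = k1 d/(k1 d − 1). Then the maximal expected unit profit d ↦ Π(τ*(d), d) = (1 − τ*(d))·e^{−β(τ*(d))·d} is strictly decreasing in d on (0,∞) and tends to 0 as d → ∞. -/
/-!
With `u = -k1 d > 0` the optimal price is `τ* = u / (u + 1)`, so `1 - τ* = 1 / (u + 1)` and
`-k1 d · log τ* = u log u - u log (u + 1)`; hence the maximal profit is `exp (φ u - k2 d)` with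
`φ u = u log u - (u + 1) log (u + 1)`. Since `φ' u = log u - log (u + 1) < 0` and `φ ≤ 0`, the
exponent is strictly decreasing in `d` and bounded above by `-k2 d → -∞`.
-/

open Real Set Filter

noncomputable def mulLogGap (u : ℝ) : ℝ := u * log u - (u + 1) * log (u + 1)

lemma hasDerivAt_mulLogGap {u : ℝ} (hu : 0 < u) :
    HasDerivAt mulLogGap (log u - log (u + 1)) u := by
  have hshift : HasDerivAt (fun x : ℝ => (x + 1) * log (x + 1)) (log (u + 1) + 1) u :=
    (hasDerivAt_mul_log (by linarith : u + 1 ≠ 0)).comp_add_const u 1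
  exact ((hasDerivAt_mul_log hu.ne').sub hshift).congr_deriv (by ring)

lemma strictAntiOn_mulLogGap : StrictAntiOn mulLogGap (Ioi 0) := by
  refine strictAntiOn_of_hasDerivWithinAt_neg (convex_Ioi 0)
    (fun u hu => (hasDerivAt_mulLogGap hu).continuousAt.continuousWithinAt)
    (fun u hu => (hasDerivAt_mulLogGap (interior_subset hu)).hasDerivWithinAt) ?_
  intro u hu
  have hu : 0 < u := interior_subset hu
  linarith [log_lt_log hu (lt_add_one u)]

lemma mulLogGap_nonpos {u : ℝ} (hu : 0 < u) : mulLogGap u ≤ 0 := by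
  have hlog : log u ≤ log (u + 1) := log_le_log hu (by linarith)
  have hlog_nonneg : 0 ≤ log (u + 1) := log_nonneg (by linarith)
  unfold mulLogGap
  nlinarith

lemma optimal_profit_eq_exp {k1 d : ℝ} (k2 : ℝ) (hk1 : k1 < 0) (hd : 0 < d) :
    (1 - k1 * d / (k1 * d - 1)) * exp (-(k1 * log (k1 * d / (k1 * d - 1)) + k2) * d) =
      exp (mulLogGap (-k1 * d) - k2 * d) := by
  set u := -k1 * d with hu_def
  have hu : 0 < u := mul_pos (neg_pos.mpr hk1) hd
  have hτ : k1 * d / (k1 * d - 1) = u / (u + 1) := by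
    rw [hu_def, ← neg_div_neg_eq]
    ring_nf
  have h1τ : 1 - u / (u + 1) = exp (-log (u + 1)) := by
    rw [exp_neg, exp_log (by linarith)]
    field_simp
    ring
  rw [hτ, h1τ, log_div hu.ne' (by linarith), ← exp_add, mulLogGap]
  congr 1
  linear_combination (log u - log (u + 1)) * hu_def

section Exponent

variable {k1 k2 : ℝ}

lemma strictAntiOn_profit_exponent (hk1 : k1 < 0) (hk2 : 0 ≤ k2) :
    StrictAntiOn (fun d => mulLogGap (-k1 * d) - k2 * d) (Ioi 0) := by
  intro a ha b hb hab
  have hscale : ∀ {x : ℝ}, 0 < x → -k1 * x ∈ Ioi (0 : ℝ) :=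
    fun hx => mul_pos (neg_pos.mpr hk1) hx
  have hgap := strictAntiOn_mulLogGap (hscale ha) (hscale hb)
    (mul_lt_mul_of_pos_left hab (neg_pos.mpr hk1))
  have hlin : k2 * a ≤ k2 * b := mul_le_mul_of_nonneg_left hab.le hk2
  linarith

lemma tendsto_profit_exponent_atBot (hk1 : k1 < 0) (hk2 : 0 < k2) :
    Tendsto (fun d => mulLogGap (-k1 * d) - k2 * d) atTop atBot := by
  refine tendsto_atBot_mono' atTop ?_ (tendsto_id.const_mul_atTop_of_neg (neg_neg_of_pos hk2))
  filter_upwards [eventually_gt_atTop 0] with d hd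
  have hgap := mulLogGap_nonpos (mul_pos (neg_pos.mpr hk1) hd)
  simp only [id]
  linarith

end Exponent

theorem max_profit_decreasing (k1 k2 : ℝ) (hk1 : k1 < 0) (hk2 : 0 < k2) :
    StrictAntiOn
      (fun d : ℝ =>
        (1 - k1 * d / (k1 * d - 1)) *
          Real.exp (-(k1 * Real.log (k1 * d / (k1 * d - 1)) + k2) * d))
      (Set.Ioi 0) ∧
    Filter.Tendsto
      (fun d : ℝ =>
        (1 - k1 * d / (k1 * d - 1)) *
          Real.exp (-(k1 * Real.log (k1 * d / (k1 * d - 1)) + k2) * d))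
      Filter.atTop (nhds 0) := by
  have hprofit : EqOn (fun d => exp (mulLogGap (-k1 * d) - k2 * d))
      (fun d => (1 - k1 * d / (k1 * d - 1)) * exp (-(k1 * log (k1 * d / (k1 * d - 1)) + k2) * d))
      (Ioi 0) :=
    fun d hd => (optimal_profit_eq_exp k2 hk1 hd).symm
  constructor
  · exact (exp_strictMono.comp_strictAntiOn (strictAntiOn_profit_exponent hk1 hk2.le)).congr
      hprofit
  · refine (tendsto_exp_atBot.comp (tendsto_profit_exponent_atBot hk1 hk2)).congr' ?_
    filter_upwards [eventually_gt_atTop 0] with d hd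
    exact hprofit hd
end

section
/- Let λ > 0 be a user density, R > 0 a coverage radius, k1 < 0, k2 > 0 and β(τ) = k1 ln τ + k2 (assumed positive on (0,1)). Fix W > 0 with W > R and define N = λπW², P^R = R²/W², and P^D(τ, d_u) = (2/(W²β(τ)²))((−β(τ)(R+d_u) − 1)e^{−β(τ)d_u} + β(τ)R + 1). Then lim_{W→∞, d_u = W−R} N·(P^R + (1−τ)·P^D(τ, W−R)) = λπ·(R² + (2(1−τ)/β(τ)²)·(β(τ)R + 1)). -/
/-!
Multiplying out by `N = λπW²` cancels the `W²` in both probabilities, so the revenue equals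
`λπ (R² + 2(1-τ)/β² · ((-βW - 1) e^{-β(W-R)} + βR + 1))` exactly. Since `β > 0`, the
boundary term `(-βW - 1) e^{-β(W-R)}` decays exponentially and only `βR + 1` survives.
-/

open Real Filter Topology

lemma tendsto_affine_mul_exp_neg_mul_atTop {b : ℝ} (hb : 0 < b) (a c : ℝ) :
    Tendsto (fun x => (a * x + c) * exp (-(b * x))) atTop (𝓝 0) := by
  have hbx : Tendsto (fun x => b * x) atTop atTop := tendsto_id.const_mul_atTop hb
  have hlin : Tendsto (fun y => a / b * (y ^ 1 * exp (-y)) + c * exp (-y)) atTop (𝓝 0) := by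
    simpa using ((tendsto_pow_mul_exp_neg_atTop_nhds_zero 1).const_mul (a / b)).add
      (tendsto_exp_neg_atTop_nhds_zero.const_mul c)
  refine (hlin.comp hbx).congr fun x => ?_
  simp only [Function.comp_apply, pow_one]
  field_simp

lemma tendsto_boundary_term_atTop {β : ℝ} (hβ : 0 < β) (R : ℝ) :
    Tendsto (fun W => (-β * (R + (W - R)) - 1) * exp (-β * (W - R))) atTop (𝓝 0) := by
  have h := (tendsto_affine_mul_exp_neg_mul_atTop hβ (-β) (-1)).mul_const (exp (β * R))
  rw [zero_mul] at h
  refine h.congr fun W => ?_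
  rw [mul_assoc, ← exp_add]
  ring_nf

lemma regional_revenue_eq {W : ℝ} (hW : W ≠ 0) (lam R τ β E : ℝ) :
    lam * π * W ^ 2 * (R ^ 2 / W ^ 2 + (1 - τ) * (2 / (W ^ 2 * β ^ 2) * (E + β * R + 1))) =
      lam * π * (R ^ 2 + 2 * (1 - τ) / β ^ 2 * (E + (β * R + 1))) := by
  field_simp
  ring

theorem limiting_regional_revenue_general (lam R k1 k2 τ : ℝ)
    (hβpos : ∀ t ∈ Set.Ioo (0 : ℝ) 1, 0 < k1 * Real.log t + k2)
    (hτ : τ ∈ Set.Ioo (0 : ℝ) 1) :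
    Filter.Tendsto
      (fun W : ℝ =>
        (lam * Real.pi * W ^ 2) *
          (R ^ 2 / W ^ 2 +
            (1 - τ) *
              ((2 / (W ^ 2 * (k1 * Real.log τ + k2) ^ 2)) *
                ((-(k1 * Real.log τ + k2) * (R + (W - R)) - 1) *
                    Real.exp (-(k1 * Real.log τ + k2) * (W - R)) +
                  (k1 * Real.log τ + k2) * R + 1))))
      Filter.atTop
      (nhds (lam * Real.pi *
        (R ^ 2 + (2 * (1 - τ) / (k1 * Real.log τ + k2) ^ 2) *
          ((k1 * Real.log τ + k2) * R + 1)))) := by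
  set β := k1 * Real.log τ + k2
  have hlim := (((tendsto_boundary_term_atTop (hβpos τ hτ) R).add_const (β * R + 1)).const_mul
    (2 * (1 - τ) / β ^ 2)).const_add (R ^ 2) |>.const_mul (lam * π)
  rw [zero_add] at hlim
  refine hlim.congr' ?_
  filter_upwards [eventually_ne_atTop 0] with W hW
  exact (regional_revenue_eq hW _ _ _ _ _).symm

theorem limiting_regional_revenue (lam R k1 k2 τ : ℝ)
    (hlam : 0 < lam) (hR : 0 < R) (hk1 : k1 < 0) (hk2 : 0 < k2)
    (hβpos : ∀ t ∈ Set.Ioo (0 : ℝ) 1, 0 < k1 * Real.log t + k2)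
    (hτ : τ ∈ Set.Ioo (0 : ℝ) 1) :
    Filter.Tendsto
      (fun W : ℝ =>
        (lam * Real.pi * W ^ 2) *
          (R ^ 2 / W ^ 2 +
            (1 - τ) *
              ((2 / (W ^ 2 * (k1 * Real.log τ + k2) ^ 2)) *
                ((-(k1 * Real.log τ + k2) * (R + (W - R)) - 1) *
                    Real.exp (-(k1 * Real.log τ + k2) * (W - R)) +
                  (k1 * Real.log τ + k2) * R + 1))))
      Filter.atTop
      (nhds (lam * Real.pi *
        (R ^ 2 + (2 * (1 - τ) / (k1 * Real.log τ + k2) ^ 2) *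
          ((k1 * Real.log τ + k2) * R + 1)))) :=
  limiting_regional_revenue_general lam R k1 k2 τ hβpos hτ
end
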